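/- arXiv:2106.10903 — 2 statements merged into one kernel-verified Lean document; each statement's English description precedes it below -/
import Mathlib

section
/- Let q = 2^m with m even, m ≥ 4. Then the incidence structure (U_{q+1}, B_{σ_{5,2},q+1}), where B_{σ_{5,2},q+1} is the set of 5-subsets B of U_{q+1} with σ_{5,2}(B) = 0, is a Steiner system S(3, 5, q+1): every 3-subset of U_{q+1} lies in exactly one such 5-subset. -/
open Finset

/-- The `l`-th elementary symmetric polynomial evaluated on a finite set `B`. -/
noncomputable def esym {F : Type*} [CommRing F] (B : Finset F) (l : ℕ) : F :=
  ∑ s ∈ B.powersetCard l, ∏ x ∈ s, x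

/-- The set of `n`-th roots of unity. -/
def rootsSet (F : Type*) [Monoid F] (n : ℕ) : Set F := {u | u ^ n = 1}

/-!
Let `σ` be the Frobenius `u ↦ u ^ q` of `GF(q²)`, so that `σ u = u⁻¹` on `U_{q+1}`, and let `ω` be a
primitive cube root of unity; as `m` is even, `q ≡ 1 [MOD 3]`, so `σ ω = ω`.

Fix distinct `a, b, c ∈ U_{q+1}`. For a block `{a, b, c, x, y}`, applying `σ` to `σ₂ = 0` gives
`σ₃ = 0`, and in characteristic 2 these two equations say that `x` and `y` are the roots of a
quadratic `A z² + W z + C` whose coefficients depend only on `a, b, c`. Here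
`A = (a + ω b + ω² c) (a + ω² b + ω c)`, and applying `σ` to a vanishing factor forces two of
`a, b, c` to coincide; so `A ≠ 0` and the block is unique. Conversely the roots are
`(G + ω W) / A` and `(G + ω² W) / A` for an explicit cubic `G`. Conjugation maps `A` to
`C / (a b c)²` and `G + ω W` to `(G + ω² W) / (a b c)²`, and `(G + ω W) (G + ω² W) = A C`, so both
roots lie on `U_{q+1}`. They avoid `a, b, c` because the quadratic takes the value
`((a + b) (a + c))²` at `a`.
-/

theorem Multiset.esymm_cons {R : Type*} [CommSemiring R] (a : R) (s : Multiset R) (n : ℕ) :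
    (a ::ₘ s).esymm (n + 1) = s.esymm (n + 1) + a * s.esymm n := by
  simp [Multiset.esymm, Multiset.powersetCard_cons, Multiset.sum_map_mul_left]

theorem Finset.pair_eq_pair_of_add_eq_of_mul_eq {R : Type*} [CommRing R] [IsDomain R]
    [DecidableEq R] {x y x' y' : R} (hs : x + y = x' + y') (hp : x * y = x' * y') :
    ({x, y} : Finset R) = {x', y'} := by
  have h : (x - x') * (x - y') = 0 := by linear_combination x * hs - hp
  rcases mul_eq_zero.mp h with h | h
  · obtain rfl : x = x' := sub_eq_zero.mp h
    obtain rfl : y = y' := by linear_combination hs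
    rfl
  · obtain rfl : x = y' := sub_eq_zero.mp h
    obtain rfl : y = x' := by linear_combination hs
    exact pair_comm _ _

theorem Finset.exists_eq_union_pair {α : Type*} [DecidableEq α] {E B : Finset α} (hEB : E ⊆ B)
    (hcard : B.card = E.card + 2) :
    ∃ x y, x ≠ y ∧ x ∉ E ∧ y ∉ E ∧ B = E ∪ {x, y} := by
  obtain ⟨x, y, hxy, hB⟩ := card_eq_two.mp (by rw [card_sdiff_of_subset hEB]; omega :
    (B \ E).card = 2)
  have hx : x ∈ B \ E := by simp [hB]
  have hy : y ∈ B \ E := by simp [hB]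
  exact ⟨x, y, hxy, (mem_sdiff.mp hx).2, (mem_sdiff.mp hy).2, by
    rw [← hB, union_sdiff_of_subset hEB]⟩

section esym

variable {F : Type*} [CommRing F]

theorem esym_eq_esymm (B : Finset F) (l : ℕ) : esym B l = B.val.esymm l := by
  unfold esym
  simpa using (Finset.esymm_map_val id B l).symm

theorem esym_insert [DecidableEq F] {u : F} {S : Finset F} (hu : u ∉ S) (n : ℕ) :
    esym (insert u S) (n + 1) = esym S (n + 1) + u * esym S n := by
  simp only [esym_eq_esymm, Finset.insert_val_of_notMem hu, Multiset.esymm_cons]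

theorem esym_one (S : Finset F) : esym S 1 = ∑ x ∈ S, x := by
  simp [esym, powersetCard_one]

theorem esym_two_union_pair [DecidableEq F] {a b c x y : F} (hab : a ≠ b) (hac : a ≠ c)
    (hbc : b ≠ c) (hxy : x ≠ y) (hx : x ∉ ({a, b, c} : Finset F))
    (hy : y ∉ ({a, b, c} : Finset F)) :
    esym ({a, b, c} ∪ {x, y}) 2 = x * y + (a + b + c) * (x + y) + (a * b + a * c + b * c) := by
  simp only [mem_insert, mem_singleton, not_or] at hx hy
  obtain ⟨hxa, hxb, hxc⟩ := hx
  obtain ⟨hya, hyb, hyc⟩ := hy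
  have hy2 : esym {y} 2 = 0 := by rw [esym, powersetCard_eq_empty.mpr (by simp), sum_empty]
  rw [insert_union, insert_union, ← insert_eq]
  simp [esym_insert, esym_one, hy2, hab, hac, hbc, hxy, Ne.symm hxa, Ne.symm hxb,
    Ne.symm hxc, Ne.symm hya, Ne.symm hyb, Ne.symm hyc]
  ring

end esym

section UnitCircle

variable {F : Type*} [Field F] {σ : F →+* F}

variable (σ) in
/-- For `σ` the `q`-power Frobenius of `GF(q²)` this is `U_{q+1}`. -/
def unitCircle : Set F := {u | σ u * u = 1}

theorem ne_zero_of_mem_unitCircle {u : F} (hu : u ∈ unitCircle σ) : u ≠ 0 :=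
  right_ne_zero_of_mul_eq_one hu

theorem map_eq_inv_of_mem_unitCircle {u : F} (hu : u ∈ unitCircle σ) : σ u = u⁻¹ :=
  eq_inv_of_mul_eq_one_left hu

/-- `σ` inverts every point of a block `B ⊆ U`, and `σ₂(B⁻¹) = σ₃(B) / σ₅(B)`. -/
theorem esym_three_eq_zero_of_esym_two_eq_zero {a b c x y : F} (ha : a ∈ unitCircle σ)
    (hb : b ∈ unitCircle σ) (hc : c ∈ unitCircle σ) (hx : x ∈ unitCircle σ)
    (hy : y ∈ unitCircle σ)
    (h : x * y + (a + b + c) * (x + y) + (a * b + a * c + b * c) = 0) :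
    (a + b + c) * (x * y) + (a * b + a * c + b * c) * (x + y) + a * b * c = 0 := by
  have hσ := congrArg σ h
  simp only [map_add, map_mul, map_zero, map_eq_inv_of_mem_unitCircle, ha, hb, hc, hx, hy] at hσ
  have := ne_zero_of_mem_unitCircle ha
  have := ne_zero_of_mem_unitCircle hb
  have := ne_zero_of_mem_unitCircle hc
  have := ne_zero_of_mem_unitCircle hx
  have := ne_zero_of_mem_unitCircle hy
  field_simp at hσ
  linear_combination hσ

theorem eq_of_add_mul_add_sq_mul_eq_zero {ω a b c : F} (hω : ω ^ 2 + ω + 1 = 0)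
    (hσω : σ ω = ω) (ha : a ∈ unitCircle σ) (hb : b ∈ unitCircle σ) (hc : c ∈ unitCircle σ)
    (h : a + ω * b + ω ^ 2 * c = 0) : b = c := by
  have hσ := congrArg σ h
  simp only [map_add, map_mul, map_pow, map_zero, hσω, map_eq_inv_of_mem_unitCircle, ha, hb,
    hc] at hσ
  have := ne_zero_of_mem_unitCircle ha
  have := ne_zero_of_mem_unitCircle hb
  have := ne_zero_of_mem_unitCircle hc
  field_simp at hσ
  have : (b - c) ^ 2 = 0 := by
    linear_combination (ω * c + ω ^ 2 * b) * h - hσ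
      - (b * c * (ω ^ 2 - ω + 1) + (ω - 1) * (b ^ 2 + c ^ 2)) * hω
  exact sub_eq_zero.mp (pow_eq_zero_iff two_ne_zero |>.mp this)

end UnitCircle

section Quadratic

variable {F : Type*} [Field F]

/-! If `{a, b, c, x, y}` is a block, `x` and `y` are the roots of
`quadA a b c * z ^ 2 + quadB a b c * z + quadC a b c`. In characteristic 2 the substitution
`z = quadB * t / quadA` turns this into `t ^ 2 + t = quadA * quadC / quadB ^ 2`. Writing
`G = quadNum 0`, one has `(G / quadB) ^ 2 + G / quadB = quadA * quadC / quadB ^ 2 + 1`, and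
`ω ^ 2 + ω = 1`, so `t = G / quadB + ω = quadNum ω / quadB` is a solution. -/

def quadA (a b c : F) : F := (a + b + c) ^ 2 + (a * b + a * c + b * c)

def quadB (a b c : F) : F := (a + b) * (a + c) * (b + c)

def quadC (a b c : F) : F := (a * b + a * c + b * c) ^ 2 + (a + b + c) * (a * b * c)

def quadNum (ζ a b c : F) : F := a ^ 2 * c + a * b ^ 2 + b * c ^ 2 + a * b * c + ζ * quadB a b c

noncomputable def quadRoot (ζ a b c : F) : F := quadNum ζ a b c / quadA a b c

variable {σ : F →+* F} {a b c x y ω : F}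

theorem map_quadA (ha : a ∈ unitCircle σ) (hb : b ∈ unitCircle σ) (hc : c ∈ unitCircle σ) :
    σ (quadA a b c) * (a * b * c) ^ 2 = quadC a b c := by
  have := ne_zero_of_mem_unitCircle ha
  have := ne_zero_of_mem_unitCircle hb
  have := ne_zero_of_mem_unitCircle hc
  simp only [quadA, quadC, map_add, map_mul, map_pow, map_eq_inv_of_mem_unitCircle, ha, hb, hc]
  field_simp
  ring

variable [CharP F 2]

theorem quadA_eq_mul (hω : ω ^ 2 + ω + 1 = 0) :
    quadA a b c = (a + ω * b + ω ^ 2 * c) * (a + ω * c + ω ^ 2 * b) := by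
  unfold quadA
  grind

theorem quadA_ne_zero (hω : ω ^ 2 + ω + 1 = 0) (hσω : σ ω = ω) (ha : a ∈ unitCircle σ)
    (hb : b ∈ unitCircle σ) (hc : c ∈ unitCircle σ) (hbc : b ≠ c) : quadA a b c ≠ 0 := by
  rw [quadA_eq_mul hω]
  exact mul_ne_zero (fun h => hbc (eq_of_add_mul_add_sq_mul_eq_zero hω hσω ha hb hc h))
    (fun h => hbc (eq_of_add_mul_add_sq_mul_eq_zero hω hσω ha hc hb h).symm)

theorem quadB_ne_zero (hab : a ≠ b) (hac : a ≠ c) (hbc : b ≠ c) : quadB a b c ≠ 0 := by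
  simp only [quadB, ne_eq, mul_eq_zero, CharTwo.add_eq_zero, not_or]
  exact ⟨⟨hab, hac⟩, hbc⟩

theorem vieta_of_esym_two_eq_zero
    (h₂ : x * y + (a + b + c) * (x + y) + (a * b + a * c + b * c) = 0)
    (h₃ : (a + b + c) * (x * y) + (a * b + a * c + b * c) * (x + y) + a * b * c = 0) :
    quadA a b c * (x + y) = quadB a b c ∧ quadA a b c * (x * y) = quadC a b c := by
  unfold quadA quadB quadC
  constructor <;> grind

theorem esym_two_eq_zero_of_vieta (hA : quadA a b c ≠ 0)
    (hs : quadA a b c * (x + y) = quadB a b c) (hp : quadA a b c * (x * y) = quadC a b c) :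
    x * y + (a + b + c) * (x + y) + (a * b + a * c + b * c) = 0 := by
  apply mul_left_cancel₀ hA
  unfold quadA quadB quadC at *
  grind

theorem not_mem_of_vieta [DecidableEq F] (hab : a ≠ b) (hac : a ≠ c) (hbc : b ≠ c)
    (hs : quadA a b c * (x + y) = quadB a b c) (hp : quadA a b c * (x * y) = quadC a b c) :
    x ∉ ({a, b, c} : Finset F) ∧ y ∉ ({a, b, c} : Finset F) := by
  have hab' : a + b ≠ 0 := CharTwo.add_eq_zero.not.mpr hab
  have hac' : a + c ≠ 0 := CharTwo.add_eq_zero.not.mpr hac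
  have hbc' : b + c ≠ 0 := CharTwo.add_eq_zero.not.mpr hbc
  have hqa : quadA a b c * ((a + x) * (a + y)) = ((a + b) * (a + c)) ^ 2 := by
    unfold quadA quadB quadC at *; grind
  have hqb : quadA a b c * ((b + x) * (b + y)) = ((a + b) * (b + c)) ^ 2 := by
    unfold quadA quadB quadC at *; grind
  have hqc : quadA a b c * ((c + x) * (c + y)) = ((a + c) * (b + c)) ^ 2 := by
    unfold quadA quadB quadC at *; grind
  have key : ∀ z ∈ ({a, b, c} : Finset F), quadA a b c * ((z + x) * (z + y)) ≠ 0 := by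
    simp only [mem_insert, mem_singleton, forall_eq_or_imp, forall_eq, hqa, hqb, hqc]
    exact ⟨pow_ne_zero 2 (mul_ne_zero hab' hac'), pow_ne_zero 2 (mul_ne_zero hab' hbc'),
      pow_ne_zero 2 (mul_ne_zero hac' hbc')⟩
  constructor <;> intro hmem
  · exact key x hmem (by simp [CharTwo.add_self_eq_zero])
  · exact key y hmem (by simp [CharTwo.add_self_eq_zero])

theorem quadNum_mul_quadNum_add_one (hω : ω ^ 2 + ω + 1 = 0) :
    quadNum ω a b c * quadNum (ω + 1) a b c = quadA a b c * quadC a b c := by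
  unfold quadNum quadA quadB quadC
  grind

theorem quadRoot_vieta (hω : ω ^ 2 + ω + 1 = 0) (hA : quadA a b c ≠ 0) :
    quadA a b c * (quadRoot ω a b c + quadRoot (ω + 1) a b c) = quadB a b c ∧
      quadA a b c * (quadRoot ω a b c * quadRoot (ω + 1) a b c) = quadC a b c := by
  unfold quadRoot
  constructor
  · rw [← add_div, mul_div_cancel₀ _ hA]
    unfold quadNum
    grind
  · rw [div_mul_div_comm, quadNum_mul_quadNum_add_one hω]
    field_simp

theorem map_quadNum {ζ : F} (hσζ : σ ζ = ζ) (ha : a ∈ unitCircle σ) (hb : b ∈ unitCircle σ)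
    (hc : c ∈ unitCircle σ) : σ (quadNum ζ a b c) * (a * b * c) ^ 2 = quadNum (ζ + 1) a b c := by
  have := ne_zero_of_mem_unitCircle ha
  have := ne_zero_of_mem_unitCircle hb
  have := ne_zero_of_mem_unitCircle hc
  simp only [quadNum, quadB, map_add, map_mul, map_pow, hσζ, map_eq_inv_of_mem_unitCircle, ha,
    hb, hc]
  field_simp
  grind

theorem quadRoot_mem_unitCircle (hω : ω ^ 2 + ω + 1 = 0) (hσω : σ ω = ω)
    (ha : a ∈ unitCircle σ) (hb : b ∈ unitCircle σ) (hc : c ∈ unitCircle σ)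
    (hA : quadA a b c ≠ 0) : quadRoot ω a b c ∈ unitCircle σ := by
  have habc : (a * b * c) ^ 2 ≠ 0 := by
    have := ne_zero_of_mem_unitCircle ha
    have := ne_zero_of_mem_unitCircle hb
    have := ne_zero_of_mem_unitCircle hc
    positivity
  have hσA := eq_div_of_mul_eq habc (map_quadA ha hb hc)
  have hσN := eq_div_of_mul_eq habc (map_quadNum hσω ha hb hc)
  have hC : quadC a b c ≠ 0 := by
    rw [← map_quadA ha hb hc]
    exact mul_ne_zero ((map_ne_zero σ).mpr hA) habc
  change σ (quadRoot ω a b c) * quadRoot ω a b c = 1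
  rw [quadRoot, map_div₀, hσA, hσN, div_div_div_cancel_right₀ habc, div_mul_div_comm,
    div_eq_one_iff_eq (mul_ne_zero hC hA)]
  linear_combination quadNum_mul_quadNum_add_one hω

end Quadratic

section Blocks

variable {F : Type*} [Field F]

def IsBlock (σ : F →+* F) (E B : Finset F) : Prop :=
  ↑B ⊆ unitCircle σ ∧ B.card = 5 ∧ esym B 2 = 0 ∧ E ⊆ B

variable [CharP F 2] [DecidableEq F] {σ : F →+* F} {a b c : F}

theorem isBlock_union_quadRoot {ω : F} (hω : ω ^ 2 + ω + 1 = 0) (hσω : σ ω = ω)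
    (ha : a ∈ unitCircle σ) (hb : b ∈ unitCircle σ) (hc : c ∈ unitCircle σ) (hab : a ≠ b)
    (hac : a ≠ c) (hbc : b ≠ c) :
    IsBlock σ {a, b, c} ({a, b, c} ∪ {quadRoot ω a b c, quadRoot (ω + 1) a b c}) := by
  have hA := quadA_ne_zero hω hσω ha hb hc hbc
  obtain ⟨hs, hp⟩ := quadRoot_vieta (a := a) (b := b) (c := c) hω hA
  set x₁ := quadRoot ω a b c
  set x₂ := quadRoot (ω + 1) a b c
  have hx₁₂ : x₁ ≠ x₂ := fun h => quadB_ne_zero hab hac hbc <| by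
    rw [← hs, h, CharTwo.add_self_eq_zero, mul_zero]
  obtain ⟨hx₁, hx₂⟩ := not_mem_of_vieta hab hac hbc hs hp
  have hω' : (ω + 1) ^ 2 + (ω + 1) + 1 = 0 := by
    linear_combination hω + (ω + 1) * (CharTwo.two_eq_zero : (2 : F) = 0)
  refine ⟨?_, ?_, ?_, subset_union_left⟩
  · simp only [coe_union, coe_insert, coe_singleton, Set.union_subset_iff, Set.insert_subset_iff,
      Set.singleton_subset_iff]
    exact ⟨⟨ha, hb, hc⟩, quadRoot_mem_unitCircle hω hσω ha hb hc hA,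
      quadRoot_mem_unitCircle hω' (by simp [hσω]) ha hb hc hA⟩
  · rw [card_union_of_disjoint (disjoint_insert_right.mpr ⟨hx₁, disjoint_singleton_right.mpr hx₂⟩),
      card_pair hx₁₂, card_eq_three.mpr ⟨a, b, c, hab, hac, hbc, rfl⟩]
  · rw [esym_two_union_pair hab hac hbc hx₁₂ hx₁ hx₂]
    exact esym_two_eq_zero_of_vieta hA hs hp

theorem eq_union_of_isBlock {x₁ x₂ : F} (ha : a ∈ unitCircle σ) (hb : b ∈ unitCircle σ)
    (hc : c ∈ unitCircle σ) (hab : a ≠ b) (hac : a ≠ c) (hbc : b ≠ c) (hA : quadA a b c ≠ 0)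
    (hs : quadA a b c * (x₁ + x₂) = quadB a b c) (hp : quadA a b c * (x₁ * x₂) = quadC a b c)
    {B : Finset F} (hB : IsBlock σ {a, b, c} B) : B = {a, b, c} ∪ {x₁, x₂} := by
  obtain ⟨hBU, hB₅, hB₂, hEB⟩ := hB
  obtain ⟨x, y, hxy, hx, hy, rfl⟩ := exists_eq_union_pair hEB <| by
    rw [hB₅, card_eq_three.mpr ⟨a, b, c, hab, hac, hbc, rfl⟩]
  have hxU : x ∈ unitCircle σ := hBU (by simp)
  have hyU : y ∈ unitCircle σ := hBU (by simp)
  rw [esym_two_union_pair hab hac hbc hxy hx hy] at hB₂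
  obtain ⟨hs', hp'⟩ := vieta_of_esym_two_eq_zero hB₂
    (esym_three_eq_zero_of_esym_two_eq_zero ha hb hc hxU hyU hB₂)
  rw [pair_eq_pair_of_add_eq_of_mul_eq (mul_left_cancel₀ hA (hs'.trans hs.symm))
    (mul_left_cancel₀ hA (hp'.trans hp.symm))]

end Blocks

theorem ncard_setOf_block_eq_one {F : Type*} [Field F] [CharP F 2] {σ : F →+* F} {ω : F}
    (hω : ω ^ 2 + ω + 1 = 0) (hσω : σ ω = ω) {E : Finset F} (hEU : ↑E ⊆ unitCircle σ)
    (hE : E.card = 3) :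
    {B | IsBlock σ E B}.ncard = 1 := by
  classical
  obtain ⟨a, b, c, hab, hac, hbc, rfl⟩ := card_eq_three.mp hE
  simp only [coe_insert, coe_singleton, Set.insert_subset_iff, Set.singleton_subset_iff] at hEU
  obtain ⟨ha, hb, hc⟩ := hEU
  have hA := quadA_ne_zero hω hσω ha hb hc hbc
  obtain ⟨hs, hp⟩ := quadRoot_vieta (a := a) (b := b) (c := c) hω hA
  exact Set.ncard_eq_one.mpr ⟨_, Set.eq_singleton_iff_unique_mem.mpr
    ⟨isBlock_union_quadRoot hω hσω ha hb hc hab hac hbc,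
      fun B hB => eq_union_of_isBlock ha hb hc hab hac hbc hA hs hp hB⟩⟩

theorem FiniteField.exists_sq_add_self_add_one_eq_zero {K : Type*} [Field K] [Finite K]
    (h : 3 ∣ Nat.card K - 1) : ∃ ω : K, ω ^ 2 + ω + 1 = 0 := by
  have : Fact (Nat.Prime 3) := ⟨Nat.prime_three⟩
  obtain ⟨u, hu⟩ := exists_prime_orderOf_dvd_card' (G := Kˣ) 3 (by rwa [Nat.card_units])
  have hprim : IsPrimitiveRoot (u : K) 3 := by
    rw [← hu, ← orderOf_units]
    exact IsPrimitiveRoot.orderOf _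
  refine ⟨u, ?_⟩
  have h := hprim.geom_sum_eq_zero (by norm_num)
  simp only [sum_range_succ, sum_range_zero, pow_zero, pow_one, zero_add] at h
  linear_combination h

theorem pow_eq_self_of_sq_add_self_add_one_eq_zero {R : Type*} [CommRing R] {ω : R}
    (hω : ω ^ 2 + ω + 1 = 0) {n : ℕ} (hn : n % 3 = 1) : ω ^ n = ω := by
  have h3 : ω ^ 3 = 1 := by linear_combination (ω - 1) * hω
  rw [← Nat.div_add_mod n 3, hn, pow_add, pow_mul, h3, one_pow, one_mul, pow_one]

theorem stmt7 (m : ℕ) (hm : 4 ≤ m) (heven : Even m)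
    (E : Finset (GaloisField 2 (2 * m)))
    (hEU : ↑E ⊆ rootsSet (GaloisField 2 (2 * m)) (2 ^ m + 1))
    (hE : E.card = 3) :
    {B : Finset (GaloisField 2 (2 * m)) |
        ↑B ⊆ rootsSet (GaloisField 2 (2 * m)) (2 ^ m + 1) ∧ B.card = 5 ∧
          esym B 2 = 0 ∧ E ⊆ B}.ncard = 1 := by
  let σ := iterateFrobenius (GaloisField 2 (2 * m)) 2 m
  have hroots : rootsSet (GaloisField 2 (2 * m)) (2 ^ m + 1) = unitCircle σ := by
    ext u
    simp [rootsSet, unitCircle, σ, iterateFrobenius_def, pow_succ]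
  obtain ⟨ω, hω⟩ := FiniteField.exists_sq_add_self_add_one_eq_zero
    (K := GaloisField 2 (2 * m)) <| by
      rw [GaloisField.card 2 (2 * m) (by omega), pow_mul]
      simpa using Nat.sub_dvd_pow_sub_pow 4 1 m
  have hσω : σ ω = ω := by
    obtain ⟨k, rfl⟩ := heven
    refine pow_eq_self_of_sq_add_self_add_one_eq_zero hω ?_
    rw [← two_mul, pow_mul, Nat.pow_mod]
    norm_num
  rw [hroots] at hEU ⊢
  exact ncard_setOf_block_eq_one hω hσω hEU hE
end

section
/- Let q = 2^m with m even, m ≥ 4. Any two distinct 5-subsets B_1, B_2 of U_{q+1} with σ_{5,2}(B_1) = σ_{5,2}(B_2) = 0 satisfy |B_1 ∩ B_2| ≤ 2. -/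
open Finset

attribute [local instance] Classical.propDecidable

lemma esym_zero {F : Type*} [CommRing F] (s : Finset F) : esym s 0 = 1 := by
  simp [esym]

lemma esym_empty {F : Type*} [CommRing F] (l : ℕ) : esym (∅ : Finset F) (l+1) = 0 := by
  rw [esym, Finset.powersetCard_eq_empty.mpr (by simp), Finset.sum_empty]

lemma esym_insert_s10 {F : Type*} [CommRing F] {a : F} {s : Finset F} (h : a ∉ s) (l : ℕ) :
    esym (insert a s) (l+1) = esym s (l+1) + a * esym s l := by
  classical
  unfold esym
  rw [Finset.powersetCard_succ_insert h, Finset.sum_union, Finset.sum_image, Finset.mul_sum]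
  · congr 1
    apply Finset.sum_congr rfl
    intro t ht
    rw [Finset.prod_insert (fun hc => h ((Finset.mem_powersetCard.mp ht).1 hc))]
  · intro t ht u hu he
    have hat : a ∉ t := fun hc => h ((Finset.mem_powersetCard.mp ht).1 hc)
    have hau : a ∉ u := fun hc => h ((Finset.mem_powersetCard.mp hu).1 hc)
    rw [← Finset.erase_insert hat, ← Finset.erase_insert hau, he]
  · rw [Finset.disjoint_left]
    intro t ht hti
    obtain ⟨u, hu, rfl⟩ := Finset.mem_image.mp hti
    exact h ((Finset.mem_powersetCard.mp ht).1 (Finset.mem_insert_self a u))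

lemma esym_insert_one {F : Type*} [CommRing F] {a : F} {s : Finset F} (h : a ∉ s) :
    esym (insert a s) 1 = esym s 1 + a * esym s 0 := esym_insert_s10 h 0

lemma esym_insert_two {F : Type*} [CommRing F] {a : F} {s : Finset F} (h : a ∉ s) :
    esym (insert a s) 2 = esym s 2 + a * esym s 1 := esym_insert_s10 h 1

lemma esym2_five {F : Type*} [CommRing F] {x y z a b : F}
    (h1 : x ∉ ({y,z,a,b} : Finset F)) (h2 : y ∉ ({z,a,b} : Finset F))
    (h3 : z ∉ ({a,b} : Finset F)) (h4 : a ∉ ({b} : Finset F)) :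
    esym ({x,y,z,a,b} : Finset F) 2 =
      (x*y + x*z + y*z) + (x+y+z)*(a+b) + a*b := by
  have eb1 : esym ({b} : Finset F) 1 = b := by
    rw [esym, show (1:ℕ) = Finset.card {b} from (Finset.card_singleton b).symm,
      Finset.powersetCard_self]
    simp
  have eb2 : esym ({b} : Finset F) 2 = 0 := by
    rw [esym, Finset.powersetCard_eq_empty.mpr (by simp), Finset.sum_empty]
  simp only [esym_insert_two h1, esym_insert_one h1, esym_insert_two h2, esym_insert_one h2,
    esym_insert_two h3, esym_insert_one h3, esym_insert_two h4, esym_insert_one h4,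
    eb1, eb2, esym_zero]
  ring

set_option maxHeartbeats 1000000 in
theorem stmt10 (m : ℕ) (hm : 4 ≤ m) (heven : Even m)
    (B₁ B₂ : Finset (GaloisField 2 (2 * m)))
    (hB₁U : ↑B₁ ⊆ rootsSet (GaloisField 2 (2 * m)) (2 ^ m + 1))
    (hB₂U : ↑B₂ ⊆ rootsSet (GaloisField 2 (2 * m)) (2 ^ m + 1))
    (hB₁ : B₁.card = 5) (hB₂ : B₂.card = 5)
    (h₁ : esym B₁ 2 = 0) (h₂ : esym B₂ 2 = 0) (hne : B₁ ≠ B₂) :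
    (B₁ ∩ B₂).card ≤ 2 := by
  by_contra hcard
  push_neg at hcard
  obtain ⟨T, hTsub, hT3⟩ := Finset.exists_subset_card_eq hcard
  obtain ⟨x, y, z, hxy, hxz, hyz, rfl⟩ := Finset.card_eq_three.mp hT3
  have hT1 : {x, y, z} ⊆ B₁ := hTsub.trans Finset.inter_subset_left
  have hT2 : {x, y, z} ⊆ B₂ := hTsub.trans Finset.inter_subset_right
  have hA1card : (B₁ \ {x, y, z}).card = 2 := by
    rw [Finset.card_sdiff_of_subset hT1, hB₁, hT3]
  obtain ⟨a, b, hab, hA1⟩ := Finset.card_eq_two.mp hA1card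
  have hA2card : (B₂ \ {x, y, z}).card = 2 := by
    rw [Finset.card_sdiff_of_subset hT2, hB₂, hT3]
  obtain ⟨c, d, hcd, hA2⟩ := Finset.card_eq_two.mp hA2card
  have ha' : a ∈ B₁ \ {x, y, z} := by rw [hA1]; simp
  have hb' : b ∈ B₁ \ {x, y, z} := by rw [hA1]; simp
  have hc' : c ∈ B₂ \ {x, y, z} := by rw [hA2]; simp
  have hd' : d ∈ B₂ \ {x, y, z} := by rw [hA2]; simp
  have hB1eq : B₁ = {x, y, z, a, b} := by
    rw [← Finset.union_sdiff_of_subset hT1, hA1]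
    ext u; simp; tauto
  have hB2eq : B₂ = {x, y, z, c, d} := by
    rw [← Finset.union_sdiff_of_subset hT2, hA2]
    ext u; simp; tauto
  obtain ⟨hax, hay, haz⟩ : a ≠ x ∧ a ≠ y ∧ a ≠ z := by
    have := (Finset.mem_sdiff.mp ha').2
    simpa [not_or] using this
  obtain ⟨hbx, hby, hbz⟩ : b ≠ x ∧ b ≠ y ∧ b ≠ z := by
    have := (Finset.mem_sdiff.mp hb').2
    simpa [not_or] using this
  obtain ⟨hcx, hcy, hcz⟩ : c ≠ x ∧ c ≠ y ∧ c ≠ z := by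
    have := (Finset.mem_sdiff.mp hc').2
    simpa [not_or] using this
  obtain ⟨hdx, hdy, hdz⟩ : d ≠ x ∧ d ≠ y ∧ d ≠ z := by
    have := (Finset.mem_sdiff.mp hd').2
    simpa [not_or] using this
  have hroot : ∀ u : GaloisField 2 (2 * m), u ∈ rootsSet (GaloisField 2 (2 * m)) (2 ^ m + 1) →
      u ≠ 0 ∧ u ^ 2 ^ m = u⁻¹ := by
    intro u hu
    have hu1 : u ^ (2 ^ m + 1) = 1 := hu
    have hu0 : u ≠ 0 := by
      rintro rfl
      rw [zero_pow (by positivity)] at hu1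
      exact zero_ne_one hu1
    exact ⟨hu0, eq_inv_of_mul_eq_one_left (by rw [← pow_succ]; exact hu1)⟩
  have hxB : x ∈ ({x, y, z} : Finset (GaloisField 2 (2 * m))) := by simp
  have hyB : y ∈ ({x, y, z} : Finset (GaloisField 2 (2 * m))) := by simp
  have hzB : z ∈ ({x, y, z} : Finset (GaloisField 2 (2 * m))) := by simp
  obtain ⟨hx0, hxq⟩ := hroot x (hB₁U (Finset.mem_coe.mpr (hT1 hxB)))
  obtain ⟨hy0, hyq⟩ := hroot y (hB₁U (Finset.mem_coe.mpr (hT1 hyB)))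
  obtain ⟨hz0, hzq⟩ := hroot z (hB₁U (Finset.mem_coe.mpr (hT1 hzB)))
  obtain ⟨ha0, haq⟩ := hroot a (hB₁U (Finset.mem_coe.mpr (Finset.mem_sdiff.mp ha').1))
  obtain ⟨hb0, hbq⟩ := hroot b (hB₁U (Finset.mem_coe.mpr (Finset.mem_sdiff.mp hb').1))
  obtain ⟨hc0, hcq⟩ := hroot c (hB₂U (Finset.mem_coe.mpr (Finset.mem_sdiff.mp hc').1))
  obtain ⟨hd0, hdq⟩ := hroot d (hB₂U (Finset.mem_coe.mpr (Finset.mem_sdiff.mp hd').1))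
  have h2F : (2 : GaloisField 2 (2 * m)) = 0 := by
    simpa using CharP.cast_eq_zero (GaloisField 2 (2 * m)) 2
  have freq : ∀ u v : GaloisField 2 (2 * m), (u + v) ^ 2 ^ m = u ^ 2 ^ m + v ^ 2 ^ m :=
    fun u v => add_pow_char_pow u v 2 m
  have hz2m : (0 : GaloisField 2 (2 * m)) ^ 2 ^ m = 0 := zero_pow (by positivity)
  have m1 : x ∉ ({y, z, a, b} : Finset (GaloisField 2 (2 * m))) := by
    simp only [Finset.mem_insert, Finset.mem_singleton, not_or]
    exact ⟨hxy, hxz, Ne.symm hax, Ne.symm hbx⟩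
  have m2 : y ∉ ({z, a, b} : Finset (GaloisField 2 (2 * m))) := by
    simp only [Finset.mem_insert, Finset.mem_singleton, not_or]
    exact ⟨hyz, Ne.symm hay, Ne.symm hby⟩
  have m3 : z ∉ ({a, b} : Finset (GaloisField 2 (2 * m))) := by
    simp only [Finset.mem_insert, Finset.mem_singleton, not_or]
    exact ⟨Ne.symm haz, Ne.symm hbz⟩
  have m4 : a ∉ ({b} : Finset (GaloisField 2 (2 * m))) := by simpa using hab
  have n1 : x ∉ ({y, z, c, d} : Finset (GaloisField 2 (2 * m))) := by
    simp only [Finset.mem_insert, Finset.mem_singleton, not_or]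
    exact ⟨hxy, hxz, Ne.symm hcx, Ne.symm hdx⟩
  have n2 : y ∉ ({z, c, d} : Finset (GaloisField 2 (2 * m))) := by
    simp only [Finset.mem_insert, Finset.mem_singleton, not_or]
    exact ⟨hyz, Ne.symm hcy, Ne.symm hdy⟩
  have n3 : z ∉ ({c, d} : Finset (GaloisField 2 (2 * m))) := by
    simp only [Finset.mem_insert, Finset.mem_singleton, not_or]
    exact ⟨Ne.symm hcz, Ne.symm hdz⟩
  have n4 : c ∉ ({d} : Finset (GaloisField 2 (2 * m))) := by simpa using hcd
  have E1 : (x * y + x * z + y * z) + (x + y + z) * (a + b) + a * b = 0 := by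
    have h := h₁
    rw [hB1eq, esym2_five m1 m2 m3 m4] at h
    exact h
  have E1' : (x * y + x * z + y * z) + (x + y + z) * (c + d) + c * d = 0 := by
    have h := h₂
    rw [hB2eq, esym2_five n1 n2 n3 n4] at h
    exact h
  have master : ∀ u v : GaloisField 2 (2 * m), u ≠ 0 → v ≠ 0 →
      u ^ 2 ^ m = u⁻¹ → v ^ 2 ^ m = v⁻¹ →
      (x * y + x * z + y * z) + (x + y + z) * (u + v) + u * v = 0 →
      x * y * z + (x * y + x * z + y * z) * (u + v) + (x + y + z) * (u * v) = 0 := by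
    intro u v hu0 hv0 huq hvq hE
    have h := congrArg (· ^ 2 ^ m) hE
    simp only [freq, mul_pow, hz2m, hxq, hyq, hzq, huq, hvq] at h
    have hX : x * x⁻¹ = 1 := mul_inv_cancel₀ hx0
    have hY : y * y⁻¹ = 1 := mul_inv_cancel₀ hy0
    have hZ : z * z⁻¹ = 1 := mul_inv_cancel₀ hz0
    have hU : u * u⁻¹ = 1 := mul_inv_cancel₀ hu0
    have hV : v * v⁻¹ = 1 := mul_inv_cancel₀ hv0
    linear_combination (x*y*z*u*v) * h
      - (z*u*v*(y*y⁻¹) + y*u*v*(z*z⁻¹) + y*z*v*(u*u⁻¹) + y*z*u*(v*v⁻¹)) * hX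
      - (z*u*v + x*u*v*(z*z⁻¹) + x*z*v*(u*u⁻¹) + x*z*u*(v*v⁻¹)) * hY
      - (y*u*v + x*u*v + x*y*v*(u*u⁻¹) + x*y*u*(v*v⁻¹)) * hZ
      - (y*z*v + x*z*v + x*y*v + x*y*z*(v*v⁻¹)) * hU
      - (y*z*u + x*z*u + x*y*u + x*y*z) * hV
  have E2 := master a b ha0 hb0 haq hbq E1
  have E2' := master c d hc0 hd0 hcq hdq E1'
  by_cases hst : x * y + x * z + y * z = (x + y + z) ^ 2
  · have he : x * y * z = (x + y + z) ^ 3 := by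
      linear_combination E2 - (x + y + z) * E1 + ((x + y + z) - (a + b)) * hst
    have hcube : (x + z) ^ 3 = 0 := by
      linear_combination ((x + y + z) * y ^ 2 - (x + y + z) ^ 2 * y) * h2F + y * hst - he
    have hxz0 : x + z = 0 := by
      have h3 : (3:ℕ) ≠ 0 := by norm_num
      exact (pow_eq_zero_iff h3).mp hcube
    exact hxz (by linear_combination hxz0 - z * h2F)
  · have hkey : ((x * y + x * z + y * z) - (x + y + z) ^ 2) * ((a + b) - (c + d)) = 0 := by
      linear_combination E2 - E2' - (x + y + z) * (E1 - E1')
    have hS : a + b = c + d := by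
      rcases mul_eq_zero.mp hkey with h | h
      · exact absurd (by linear_combination h) hst
      · linear_combination h
    have hP : a * b = c * d := by
      linear_combination E1 - E1' - (x + y + z) * hS
    have hcab : (c - a) * (c - b) = 0 := by
      linear_combination (-c) * hS + hP
    have hdab : (d - a) * (d - b) = 0 := by
      linear_combination (-d) * hS + hP
    have hc2 : c = a ∨ c = b := by
      rcases mul_eq_zero.mp hcab with h | h
      · left; linear_combination h
      · right; linear_combination h
    have hd2 : d = a ∨ d = b := by
      rcases mul_eq_zero.mp hdab with h | h
      · left; linear_combination h
      · right; linear_combination h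
    apply hne
    rw [hB1eq, hB2eq]
    rcases hc2 with rfl | rfl
    · rcases hd2 with rfl | rfl
      · exact absurd rfl hcd
      · rfl
    · rcases hd2 with rfl | rfl
      · exact congrArg (insert x) (congrArg (insert y) (congrArg (insert z)
          (Finset.pair_comm _ _)))
      · exact absurd rfl hcd
end
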